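/- Let G ≤ Sym(M) be closed and locally oligomorphic on a countable set M. Suppose A, B, C are algebraic closures of finite subsets of M with B ⊆ C. Then there exists g in the pointwise stabilizer G_B with g(C) ∩ A = B ∩ A. -/

import Mathlib

open Pointwise

/-- Topology of pointwise convergence on the symmetric group of a (discrete) set. -/
instance permTop (M : Type*) : TopologicalSpace (Equiv.Perm M) :=
  letI : TopologicalSpace M := ⊥
  TopologicalSpace.induced
    (fun g => ((fun x => g x, fun x => g.symm x) : (M → M) × (M → M))) inferInstance

/-- A topological group is Roelcke precompact if every open neighbourhood `U` of the identity
admits a finite set `E` with `G = U * E * U`. -/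
def RoelckePrecompact (G : Type*) [Group G] [TopologicalSpace G] : Prop :=
  ∀ U : Set G, IsOpen U → (1 : G) ∈ U →
    ∃ E : Finset G, ∀ x : G, ∃ u₁ ∈ U, ∃ e ∈ E, ∃ u₂ ∈ U, x = u₁ * e * u₂

/-- `Y` is a union of finitely many `G`-orbits. -/
def IsFinOrbitUnion {X : Type*} (G : Subgroup (Equiv.Perm X)) (Y : Set X) : Prop :=
  ∃ S : Finset X, Y = ⋃ a ∈ S, MulAction.orbit G a

/-- `G` acts oligomorphically on `Y`: finitely many orbits on `Yⁿ` for all `n`. -/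
def Oligo {X : Type*} (G : Subgroup (Equiv.Perm X)) (Y : Set X) : Prop :=
  ∀ n : ℕ, ∃ T : Finset (Fin n → X), ∀ f : Fin n → X, (∀ i, f i ∈ Y) →
    ∃ t ∈ T, ∃ g ∈ G, ∀ i, g (t i) = f i

/-- `G` is locally oligomorphic on `X`. -/
def LocallyOligo {X : Type*} (G : Subgroup (Equiv.Perm X)) : Prop :=
  ∀ Y : Set X, IsFinOrbitUnion G Y → Oligo G Y

/-- The pointwise stabilizer of `E` in `G ≤ Sym(M)`. -/
def ptStab {M : Type*} (G : Subgroup (Equiv.Perm M)) (E : Set M) : Subgroup (Equiv.Perm M) :=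
  G ⊓ ⨅ a ∈ E, MulAction.stabilizer (Equiv.Perm M) a

/-- The algebraic closure of `E`: the union of the finite orbits of the pointwise
stabilizer of `E` in `G`. -/
def acl {M : Type*} (G : Subgroup (Equiv.Perm M)) (E : Set M) : Set M :=
  {x | (MulAction.orbit (ptStab G E) x).Finite}

/-- The intersection of the open finite-index subgroups of a topological group. -/
def Gcirc (G : Type*) [Group G] [TopologicalSpace G] : Subgroup G :=
  ⨅ U ∈ {U : Subgroup G | IsOpen (U : Set G) ∧ U.index ≠ 0}, U

/-!
Put `E = E_A ∪ E_B ∪ E_C` and `N = acl E ⊇ A ∪ C`; it suffices to find `g ∈ G_B` with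
`g N ∩ N ⊆ B`. Whether `u N ∩ N ⊆ B` holds depends only on the `G_E`-orbit of `u|_E`, and by local
oligomorphicity there are finitely many such orbits, so it suffices to test it inside a finite union
`Z` of `G`-orbits containing a witness of failure for each of them. There `N ∩ Z` and `B ∩ Z` are
finite, and every point of `N ∩ Z` outside `B` has an infinite orbit under `G_F` for each finite
`F ⊆ B`, since `acl F ⊆ B`. Neumann's lemma then gives `u ∈ G_F` moving `(N ∩ Z) \ B` off `N ∩ Z`,
for `F ⊇ B ∩ Z`. As `B` is infinite in general, `u` is not yet in `G_B`; but local oligomorphicity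
also shows that the `G_F`-orbit of a finite tuple stops shrinking once `F ⊆ B` is large enough,
and a back-and-forth argument, using that `G` is closed, then yields `g ∈ G_B` agreeing with `u`
on `E`.
-/

open Set MulAction

section GroupAction

variable {Γ α : Type*} [Group Γ] [MulAction Γ α]

theorem ncard_orbit_eq_relIndex (H : Subgroup Γ) (x : α) :
    (orbit H x).ncard = (stabilizer Γ x).relIndex H := by
  have : (stabilizer Γ x).subgroupOf H = stabilizer H x := by ext; rfl
  rw [Subgroup.relIndex, this, index_stabilizer]

theorem finite_orbit_iff_relIndex_ne_zero {H : Subgroup Γ} {x : α} :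
    (orbit H x).Finite ↔ (stabilizer Γ x).relIndex H ≠ 0 := by
  rw [← ncard_orbit_eq_relIndex]
  exact ⟨fun h => Set.ncard_ne_zero_of_mem (mem_orbit_self x) h, Set.finite_of_ncard_ne_zero⟩

theorem Set.Finite.orbit_of_relIndex_ne_zero {L K : Subgroup Γ}
    (hidx : L.relIndex K ≠ 0) {x : α} (h : (orbit L x).Finite) : (orbit K x).Finite := by
  rw [finite_orbit_iff_relIndex_ne_zero] at h ⊢
  have hidx' : (stabilizer Γ x ⊓ L).relIndex K ≠ 0 :=
    Subgroup.relIndex_ne_zero_trans (by rwa [Subgroup.inf_relIndex_right]) hidx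
  exact mt (Subgroup.relIndex_eq_zero_of_le_left inf_le_left) hidx'

theorem finite_orbit_inter_setOf_finite_orbit (y : α) :
    (orbit Γ y ∩ {z | (orbit Γ z).Finite}).Finite := by
  rcases (orbit Γ y ∩ {z | (orbit Γ z).Finite}).eq_empty_or_nonempty with
    h | ⟨z, hzy, hz : (orbit Γ z).Finite⟩
  · simp [h]
  · rw [orbit_eq_iff.2 hzy] at hz
    exact hz.subset inter_subset_left

theorem exists_smul_notMem_of_infinite_orbit (Γ₀ Δ : Finset α)
    (hΓ₀ : ∀ γ ∈ Γ₀, (orbit Γ γ).Infinite) : ∃ u : Γ, ∀ γ ∈ Γ₀, u • γ ∉ Δ := by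
  -- B. H. Neumann: otherwise `Γ` is covered by finitely many cosets of the stabilizers of the
  -- points of `Γ₀`, so one of them has finite index.
  by_contra! hcover
  have hcoset : ∀ p : α × α, ∃ g : Γ,
      ∀ u : Γ, u • p.1 = p.2 → u ∈ g • (stabilizer Γ p.1 : Set Γ) := by
    intro p
    by_cases hp : ∃ g : Γ, g • p.1 = p.2
    · obtain ⟨g, hg⟩ := hp
      refine ⟨g, fun u hu => (mem_leftCoset_iff g).2 ?_⟩
      rw [SetLike.mem_coe, mem_stabilizer_iff, mul_smul, hu, ← hg, inv_smul_smul]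
    · exact ⟨1, fun u hu => (hp ⟨u, hu⟩).elim⟩
  choose g hg using hcoset
  have huniv : ⋃ p ∈ Γ₀ ×ˢ Δ, g p • (stabilizer Γ p.1 : Set Γ) = univ := by
    refine eq_univ_of_forall fun u => ?_
    obtain ⟨γ, hγ, hγΔ⟩ := hcover u
    exact mem_biUnion (Finset.mem_product.2 ⟨hγ, hγΔ⟩) (hg (γ, u • γ) u rfl)
  obtain ⟨p, hp, hfin⟩ := Subgroup.exists_finiteIndex_of_leftCoset_cover huniv
  refine hfin.index_ne_zero ?_
  rw [index_stabilizer, (hΓ₀ p.1 (Finset.mem_product.1 hp).1).ncard]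

end GroupAction

section BackAndForth

variable {α : Type*} {P : List (α × α) → Prop}

theorem exists_perm_of_chain {c : ℕ → List (α × α)} (hmono : ∀ {m n}, m ≤ n → c m ⊆ c n)
    (hreal : ∀ n, ∃ v : Equiv.Perm α, ∀ p ∈ c n, v p.1 = p.2)
    (hdom : ∀ x, ∃ n y, (x, y) ∈ c n) (hran : ∀ y, ∃ n x, (x, y) ∈ c n) :
    ∃ g : Equiv.Perm α, ∀ x, ∃ n, (x, g x) ∈ c n := by
  have hjoint : ∀ {x y x' y' m n}, (x, y) ∈ c m → (x', y') ∈ c n → (x = x' ↔ y = y') := by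
    intro x y x' y' m n hm hn
    obtain ⟨v, hv⟩ := hreal (max m n)
    have hvx : v x = y := hv _ (hmono (le_max_left m n) hm)
    have hvx' : v x' = y' := hv _ (hmono (le_max_right m n) hn)
    rw [← hvx, ← hvx']
    exact v.injective.eq_iff.symm
  choose n f hf using hdom
  have hbij : Function.Bijective f := by
    refine ⟨fun x x' h => (hjoint (hf x) (hf x')).2 h, fun y => ?_⟩
    obtain ⟨m, x, hx⟩ := hran y
    exact ⟨x, (hjoint (hf x) hx).1 rfl⟩
  exact ⟨Equiv.ofBijective f hbij, fun x => ⟨n x, hf x⟩⟩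

theorem exists_perm_of_backAndForth [Countable α]
    (hreal : ∀ L, P L → ∃ v : Equiv.Perm α, ∀ p ∈ L, v p.1 = p.2)
    (hforth : ∀ L, P L → ∀ x, ∃ y, P ((x, y) :: L))
    (hback : ∀ L, P L → ∀ y, ∃ x, P ((x, y) :: L)) {L₀ : List (α × α)} (h₀ : P L₀) :
    ∃ g : Equiv.Perm α, ∀ s : Finset α, ∃ L, P L ∧ L₀ ⊆ L ∧ ∀ a ∈ s, (a, g a) ∈ L := by
  rcases isEmpty_or_nonempty α with _ | _
  · exact ⟨1, fun _ => ⟨L₀, h₀, List.Subset.refl _, fun a => isEmptyElim a⟩⟩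
  obtain ⟨σ, hσ⟩ := exists_surjective_nat α
  have hstep : ∀ L : {L // P L}, ∀ x, ∃ L' : {L // P L},
      L.1 ⊆ L'.1 ∧ (∃ y, (x, y) ∈ L'.1) ∧ ∃ y, (y, x) ∈ L'.1 := by
    rintro ⟨L, hL⟩ x
    obtain ⟨y, hy⟩ := hforth L hL x
    obtain ⟨z, hz⟩ := hback _ hy x
    exact ⟨⟨_, hz⟩, fun p hp => .tail _ (.tail _ hp), ⟨y, .tail _ (.head _)⟩, ⟨z, .head _⟩⟩
  choose next hnext hdom hran using hstep
  let c : ℕ → {L // P L} := fun n => Nat.rec ⟨L₀, h₀⟩ (fun k L => next L (σ k)) n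
  have hmono : ∀ {m n}, m ≤ n → (c m).1 ⊆ (c n).1 := fun hmn =>
    Nat.le_induction (List.Subset.refl _) (fun n _ ih _ hp => hnext _ _ (ih hp)) _ hmn
  obtain ⟨g, hg⟩ := exists_perm_of_chain hmono (fun n => hreal _ (c n).2)
    (fun x => by obtain ⟨j, rfl⟩ := hσ x; exact ⟨j + 1, hdom (c j) (σ j)⟩)
    (fun y => by obtain ⟨j, rfl⟩ := hσ y; exact ⟨j + 1, hran (c j) (σ j)⟩)
  choose N hN using hg
  exact ⟨g, fun s => ⟨_, (c (s.sup N)).2, hmono (Nat.zero_le _),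
    fun a ha => hmono (Finset.le_sup ha) (hN a)⟩⟩

end BackAndForth

section PermutationGroup

variable {M : Type*} {G H : Subgroup (Equiv.Perm M)}

theorem mem_ptStab {E : Set M} {g : Equiv.Perm M} :
    g ∈ ptStab G E ↔ g ∈ G ∧ ∀ a ∈ E, g a = a := by
  simp [ptStab, Subgroup.mem_inf, Subgroup.mem_iInf, mem_stabilizer_iff, Equiv.Perm.smul_def]

theorem ptStab_le (E : Set M) : ptStab G E ≤ G := inf_le_left

theorem ptStab_anti {E F : Set M} (h : E ⊆ F) : ptStab G F ≤ ptStab G E := fun _ hg =>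
  mem_ptStab.2 ⟨(mem_ptStab.1 hg).1, fun a ha => (mem_ptStab.1 hg).2 a (h ha)⟩

theorem mem_orbit_subgroup_iff {x y : M} : y ∈ orbit H x ↔ ∃ g ∈ H, g x = y := by
  simp only [mem_orbit_iff, Subtype.exists, Subgroup.mk_smul, Equiv.Perm.smul_def, exists_prop]

theorem mul_mul_inv_mem_ptStab_image {D : Set M} {c k : Equiv.Perm M} (hc : c ∈ G)
    (hk : k ∈ ptStab G D) : c * k * c⁻¹ ∈ ptStab G (c '' D) := by
  refine mem_ptStab.2 ⟨mul_mem (mul_mem hc (ptStab_le D hk)) (inv_mem hc), ?_⟩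
  rintro _ ⟨a, ha, rfl⟩
  simp [Equiv.Perm.mul_apply, (mem_ptStab.1 hk).2 a ha]

theorem acl_mono {E F : Set M} (h : E ⊆ F) : acl G E ⊆ acl G F := fun x hx =>
  hx.subset fun y hy => by
    obtain ⟨g, hg, rfl⟩ := mem_orbit_subgroup_iff.1 hy
    exact mem_orbit_subgroup_iff.2 ⟨g, ptStab_anti h hg, rfl⟩

theorem apply_mem_acl_iff {E : Set M} {g : Equiv.Perm M} (hg : g ∈ ptStab G E) {x : M} :
    g x ∈ acl G E ↔ x ∈ acl G E := by
  change (orbit _ ((⟨g, hg⟩ : ptStab G E) • x)).Finite ↔ _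
  rw [orbit_smul]
  rfl

theorem orbit_subset_acl {E : Set M} {x : M} (hx : x ∈ acl G E) :
    orbit (ptStab G E) x ⊆ acl G E := fun y hy => by
  obtain ⟨g, hg, rfl⟩ := mem_orbit_subgroup_iff.1 hy
  exact (apply_mem_acl_iff hg).2 hx

theorem image_acl_subset {E : Set M} {g : Equiv.Perm M} (hg : g ∈ G) :
    g '' acl G E ⊆ acl G (g '' E) := by
  rintro _ ⟨x, hx, rfl⟩
  refine (hx.image g).subset fun y hy => ?_
  obtain ⟨k, hk, rfl⟩ := mem_orbit_subgroup_iff.1 hy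
  have hconj := mul_mul_inv_mem_ptStab_image (inv_mem hg) hk
  rw [Equiv.Perm.coe_inv, Equiv.symm_image_image] at hconj
  refine ⟨_, mem_orbit_subgroup_iff.2 ⟨_, hconj, rfl⟩, ?_⟩
  simp [Equiv.Perm.mul_apply]

theorem acl_image {E : Set M} {g : Equiv.Perm M} (hg : g ∈ G) :
    acl G (g '' E) = g '' acl G E := by
  refine (image_acl_subset hg).antisymm' fun y hy => ⟨g⁻¹ y, ?_, by simp⟩
  have h := image_acl_subset (E := g '' E) (inv_mem hg) ⟨y, hy, rfl⟩
  rwa [Equiv.Perm.coe_inv, Equiv.symm_image_image] at h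

theorem acl_subset_of_subset_acl {E F : Set M} (hF : F.Finite) (h : F ⊆ acl G E) :
    acl G F ⊆ acl G E := by
  intro x hx
  have hle : (⨅ a : F, stabilizer (Equiv.Perm M) (a : M)) ⊓ ptStab G E ≤ ptStab G (E ∪ F) := by
    intro g hg
    rw [Subgroup.mem_inf, Subgroup.mem_iInf] at hg
    refine mem_ptStab.2 ⟨ptStab_le E hg.2, fun a ha => ?_⟩
    rcases ha with ha | ha
    exacts [(mem_ptStab.1 hg.2).2 a ha, hg.1 ⟨a, ha⟩]
  have hidx : (ptStab G (E ∪ F)).relIndex (ptStab G E) ≠ 0 := by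
    have := hF.to_subtype
    refine mt (Subgroup.relIndex_eq_zero_of_le_left hle) ?_
    rw [Subgroup.inf_relIndex_right]
    exact Subgroup.relIndex_iInf_ne_zero fun a => finite_orbit_iff_relIndex_ne_zero.1 (h a.2)
  exact Set.Finite.orbit_of_relIndex_ne_zero hidx (acl_mono subset_union_right hx)

theorem IsFinOrbitUnion.apply_mem {Z : Set M} (hZ : IsFinOrbitUnion H Z) {g : Equiv.Perm M}
    (hg : g ∈ H) {x : M} (hx : x ∈ Z) : g x ∈ Z := by
  obtain ⟨S, rfl⟩ := hZ
  obtain ⟨a, ha, hxa⟩ := mem_iUnion₂.1 hx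
  obtain ⟨k, hk, rfl⟩ := mem_orbit_subgroup_iff.1 hxa
  exact mem_biUnion ha (mem_orbit_subgroup_iff.2 ⟨g * k, mul_mem hg hk, rfl⟩)

theorem IsFinOrbitUnion.union {Z Z' : Set M} (hZ : IsFinOrbitUnion H Z)
    (hZ' : IsFinOrbitUnion H Z') : IsFinOrbitUnion H (Z ∪ Z') := by
  classical
  obtain ⟨S, rfl⟩ := hZ
  obtain ⟨S', rfl⟩ := hZ'
  exact ⟨S ∪ S', (Finset.set_biUnion_union S S' _).symm⟩

theorem isFinOrbitUnion_biUnion_orbit {S : Set M} (hS : S.Finite) :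
    IsFinOrbitUnion H (⋃ a ∈ S, orbit H a) :=
  ⟨hS.toFinset, by simp⟩

theorem subset_biUnion_orbit (S : Set M) : S ⊆ ⋃ a ∈ S, orbit H a := fun a ha =>
  mem_biUnion ha (mem_orbit_self a)

theorem exists_isFinOrbitUnion_superset {S : Set M} (hS : S.Finite) :
    ∃ Z, IsFinOrbitUnion H Z ∧ S ⊆ Z :=
  ⟨_, isFinOrbitUnion_biUnion_orbit hS, subset_biUnion_orbit S⟩

theorem IsFinOrbitUnion.finite_of_subset_acl {E D : Set M}
    (hD : IsFinOrbitUnion (ptStab G E) D) (hDE : D ⊆ acl G E) : D.Finite := by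
  obtain ⟨S, rfl⟩ := hD
  exact S.finite_toSet.biUnion fun a ha => hDE (subset_biUnion_orbit (S : Set M) ha)

theorem Oligo.exists_finset {Y : Set M} (h : Oligo H Y) (ι : Type*) [Finite ι] :
    ∃ T : Finset (ι → M), ∀ f : ι → M, (∀ i, f i ∈ Y) →
      ∃ t ∈ T, ∃ g ∈ H, ∀ i, g (t i) = f i := by
  classical
  obtain ⟨n, ⟨e⟩⟩ := Finite.exists_equiv_fin ι
  obtain ⟨T, hT⟩ := h n
  refine ⟨T.image (· ∘ e), fun f hf => ?_⟩
  obtain ⟨t, ht, g, hg, hgt⟩ := hT (f ∘ e.symm) fun i => hf _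
  exact ⟨t ∘ e, Finset.mem_image_of_mem _ ht, g, hg, fun i => by simpa using hgt (e i)⟩

theorem LocallyOligo.oligo_ptStab (holig : LocallyOligo G) {F Z : Set M} (hF : F.Finite)
    (hZ : IsFinOrbitUnion G Z) : Oligo (ptStab G F) Z := by
  classical
  intro n
  have := hF.to_subtype
  obtain ⟨Z', hZ', hFZ'⟩ := exists_isFinOrbitUnion_superset (H := G) hF
  obtain ⟨T, hT⟩ := (holig _ (hZ.union hZ')).exists_finset (F ⊕ Fin n)
  -- move each representative, when possible, so that its `F`-part is the inclusion of `F`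
  have hnormal : ∀ t : F ⊕ Fin n → M, ∃ g ∈ G,
      (∃ h ∈ G, ∀ a : F, h (t (.inl a)) = a) → ∀ a : F, g (t (.inl a)) = a := by
    intro t
    by_cases ht : ∃ h ∈ G, ∀ a : F, h (t (.inl a)) = a
    · obtain ⟨h, hh, hht⟩ := ht
      exact ⟨h, hh, fun _ => hht⟩
    · exact ⟨1, one_mem G, fun h => (ht h).elim⟩
  choose g hgG hg using hnormal
  refine ⟨T.image fun t i => g t (t (.inr i)), fun w hw => ?_⟩
  obtain ⟨t, ht, h, hhG, hht⟩ := hT (Sum.elim (↑) w) fun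
    | .inl a => Or.inr (hFZ' a.2)
    | .inr i => Or.inl (hw i)
  have hgt := hg t ⟨h, hhG, fun a => hht (.inl a)⟩
  refine ⟨_, Finset.mem_image_of_mem _ ht, h * (g t)⁻¹,
    mem_ptStab.2 ⟨mul_mem hhG (inv_mem (hgG t)), fun a ha => ?_⟩, fun i => ?_⟩
  · rw [Equiv.Perm.mul_apply, Equiv.Perm.inv_eq_iff_eq.2 (hgt ⟨a, ha⟩).symm]
    exact hht (.inl ⟨a, ha⟩)
  · simpa using hht (.inr i)

theorem LocallyOligo.finite_acl_inter (holig : LocallyOligo G) {F Z : Set M} (hF : F.Finite)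
    (hZ : IsFinOrbitUnion G Z) : (acl G F ∩ Z).Finite := by
  obtain ⟨T, hT⟩ := (holig.oligo_ptStab hF hZ).exists_finset Unit
  refine (T.finite_toSet.biUnion fun t _ =>
    finite_orbit_inter_setOf_finite_orbit (Γ := ptStab G F) (t ())).subset ?_
  rintro x ⟨hx, hxZ⟩
  obtain ⟨t, ht, g, hg, hgt⟩ := hT (fun _ => x) fun _ => hxZ
  exact mem_biUnion ht ⟨mem_orbit_subgroup_iff.2 ⟨g, hg, hgt ()⟩, hx⟩

theorem exists_ptStab_eqOn_mul {EB D S : Set M} (hD : ∀ s ∈ ptStab G EB, MapsTo s D D)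
    {c k : Equiv.Perm M} (hc : c ∈ ptStab G (EB ∪ S)) (hk : k ∈ ptStab G D) :
    ∃ k' ∈ ptStab G D, EqOn k' (c * k) S := by
  have hDc : D ⊆ c '' D := fun a ha =>
    ⟨c⁻¹ a, hD _ (inv_mem (ptStab_anti subset_union_left hc)) ha, by simp⟩
  refine ⟨c * k * c⁻¹, ptStab_anti hDc (mul_mul_inv_mem_ptStab_image (ptStab_le _ hc) hk),
    fun a ha => ?_⟩
  have hca : c⁻¹ a = a := by
    rw [Equiv.Perm.inv_eq_iff_eq]
    exact ((mem_ptStab.1 hc).2 a (Or.inr ha)).symm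
  simp [Equiv.Perm.mul_apply, hca]

theorem LocallyOligo.exists_invariant_ptStab_eqOn (holig : LocallyOligo G) {EB S : Set M}
    (hEB : EB.Finite) (hS : S.Finite) :
    ∃ D₀, IsFinOrbitUnion (ptStab G EB) D₀ ∧ D₀ ⊆ acl G EB ∧
      ∀ D, IsFinOrbitUnion (ptStab G EB) D → D ⊆ acl G EB → D₀ ⊆ D →
        ∀ k ∈ ptStab G D₀, ∃ k' ∈ ptStab G D, EqOn k' k S := by
  classical
  have := hS.to_subtype
  obtain ⟨Z, hZ, hSZ⟩ := exists_isFinOrbitUnion_superset (H := G) hS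
  obtain ⟨T, hT⟩ := (holig.oligo_ptStab (hEB.union hS) hZ).exists_finset S
  -- `J D` lists the `G_{EB ∪ S}`-orbits met by the `G_D`-orbit of the inclusion of `S`. It is
  -- antitone in `D`, and `D₀` minimises it; since conjugation by `G_{EB ∪ S}` preserves `G_D`
  -- when `D` is `G_{EB}`-invariant, the `G_D`-orbit is a union of such orbits.
  let J : Set M → Finset (S → M) := fun D => T.filter fun t =>
    ∃ s ∈ ptStab G (EB ∪ S), ∃ k ∈ ptStab G D, ∀ i, s (t i) = k i
  have hJ : ∀ {D D'}, D ⊆ D' → J D' ⊆ J D := fun hDD' _ ht => by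
    obtain ⟨htT, s, hs, k, hk, hst⟩ := Finset.mem_filter.1 ht
    exact Finset.mem_filter.2 ⟨htT, s, hs, k, ptStab_anti hDD' hk, hst⟩
  obtain ⟨D₀, ⟨hD₀, hD₀B⟩, hmin⟩ := exists_minimalFor_of_wellFoundedLT
    (fun D => IsFinOrbitUnion (ptStab G EB) D ∧ D ⊆ acl G EB) (fun D => (J D).card)
    ⟨∅, ⟨∅, by simp⟩, empty_subset _⟩
  refine ⟨D₀, hD₀, hD₀B, fun D hD hDB hD₀D k hk => ?_⟩
  have hJD : J D = J D₀ := Finset.eq_of_subset_of_card_le (hJ hD₀D)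
    (hmin ⟨hD, hDB⟩ (Finset.card_le_card (hJ hD₀D)))
  obtain ⟨t, ht, s, hs, hst⟩ := hT (fun i => k i) fun i => hZ.apply_mem (ptStab_le _ hk) (hSZ i.2)
  have htJ : t ∈ J D := hJD ▸ Finset.mem_filter.2 ⟨ht, s, hs, k, hk, hst⟩
  obtain ⟨-, s', hs', k', hk', hst'⟩ := Finset.mem_filter.1 htJ
  obtain ⟨k'', hk'', hk''eq⟩ := exists_ptStab_eqOn_mul (fun c hc _ hx => hD.apply_mem hc hx)
    (mul_mem hs (inv_mem hs')) hk'
  refine ⟨k'', hk'', fun a ha => ?_⟩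
  have hs'a : s'⁻¹ (k' a) = t ⟨a, ha⟩ := by
    rw [Equiv.Perm.inv_eq_iff_eq]
    exact (hst' ⟨a, ha⟩).symm
  rw [hk''eq ha, Equiv.Perm.mul_apply, Equiv.Perm.mul_apply, hs'a]
  exact hst ⟨a, ha⟩

theorem LocallyOligo.exists_finite_ptStab_eqOn (holig : LocallyOligo G) {EB S : Set M}
    (hEB : EB.Finite) (hS : S.Finite) :
    ∃ F₀ ⊆ acl G EB, F₀.Finite ∧ ∀ F ⊆ acl G EB, F.Finite →
      ∀ k ∈ ptStab G F₀, ∃ k' ∈ ptStab G F, EqOn k' k S := by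
  obtain ⟨D₀, hD₀, hD₀B, hstable⟩ := holig.exists_invariant_ptStab_eqOn hEB hS
  refine ⟨D₀, hD₀B, hD₀.finite_of_subset_acl hD₀B, fun F hFB hF k hk => ?_⟩
  have hsat : ⋃ a ∈ F, orbit (ptStab G EB) a ⊆ acl G EB :=
    iUnion₂_subset fun a ha => orbit_subset_acl (hFB ha)
  obtain ⟨k', hk', hk'k⟩ := hstable _ (hD₀.union (isFinOrbitUnion_biUnion_orbit hF))
    (union_subset hD₀B hsat) subset_union_left k hk
  exact ⟨k', ptStab_anti ((subset_biUnion_orbit F).trans subset_union_right) hk', hk'k⟩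

theorem mem_of_isClosed_of_forall_finset {S : Set (Equiv.Perm M)} (hS : IsClosed S)
    {g : Equiv.Perm M} (h : ∀ s : Finset M, ∃ v ∈ S, ∀ a ∈ s, v a = g a ∧ v.symm a = g.symm a) :
    g ∈ S := by
  classical
  let _ : TopologicalSpace M := ⊥
  have : DiscreteTopology M := ⟨rfl⟩
  rw [← hS.closure_eq]
  refine (closure_induced (f := fun g : Equiv.Perm M =>
    ((fun x => g x, fun x => g.symm x) : (M → M) × (M → M)))).2 (mem_closure_iff.2 ?_)
  intro o ho hgo
  obtain ⟨u₁, u₂, hu₁, hu₂, hg₁, hg₂, hsub⟩ := isOpen_prod_iff.1 ho _ _ hgo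
  obtain ⟨I₁, t₁, ht₁, hsub₁⟩ := isOpen_pi_iff.1 hu₁ _ hg₁
  obtain ⟨I₂, t₂, ht₂, hsub₂⟩ := isOpen_pi_iff.1 hu₂ _ hg₂
  obtain ⟨v, hvS, hv⟩ := h (I₁ ∪ I₂)
  refine ⟨_, hsub ⟨hsub₁ fun a ha => ?_, hsub₂ fun a ha => ?_⟩, mem_image_of_mem _ hvS⟩
  · rw [Finset.mem_coe] at ha
    simpa only [(hv a (Finset.mem_union_left _ ha)).1] using (ht₁ a ha).2
  · rw [Finset.mem_coe] at ha
    simpa only [(hv a (Finset.mem_union_right _ ha)).2] using (ht₂ a ha).2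

def FinitelyRealizable (G : Subgroup (Equiv.Perm M)) (B : Set M) (L : List (M × M)) : Prop :=
  ∀ F ⊆ B, F.Finite → ∃ v ∈ ptStab G F, ∀ p ∈ L, v p.1 = p.2

theorem FinitelyRealizable.map_swap {B : Set M} {L : List (M × M)}
    (hL : FinitelyRealizable G B L) : FinitelyRealizable G B (L.map Prod.swap) := by
  intro F hFB hF
  obtain ⟨v, hv, hvL⟩ := hL F hFB hF
  refine ⟨v⁻¹, inv_mem hv, fun p hp => ?_⟩
  obtain ⟨q, hq, rfl⟩ := List.mem_map.1 hp
  exact Equiv.Perm.inv_eq_iff_eq.2 (hvL q hq).symm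

theorem FinitelyRealizable.exists_cons (holig : LocallyOligo G) {EB : Set M} (hEB : EB.Finite)
    {L : List (M × M)} (hL : FinitelyRealizable G (acl G EB) L) (x : M) :
    ∃ y, FinitelyRealizable G (acl G EB) ((x, y) :: L) := by
  obtain ⟨F₀, hF₀B, hF₀, hstable⟩ := holig.exists_finite_ptStab_eqOn hEB
    ((L.finite_toSet.image Prod.fst).insert x)
  obtain ⟨v, hv, hvL⟩ := hL F₀ hF₀B hF₀
  refine ⟨v x, fun F hFB hF => ?_⟩
  obtain ⟨k, hk, hkv⟩ := hstable F hFB hF v hv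
  refine ⟨k, hk, fun p hp => ?_⟩
  rcases List.mem_cons.1 hp with rfl | hp
  · exact hkv (mem_insert _ _)
  · rw [hkv (mem_insert_of_mem _ (mem_image_of_mem _ hp))]
    exact hvL p hp

theorem FinitelyRealizable.exists_cons_swap (holig : LocallyOligo G) {EB : Set M}
    (hEB : EB.Finite) {L : List (M × M)} (hL : FinitelyRealizable G (acl G EB) L) (y : M) :
    ∃ x, FinitelyRealizable G (acl G EB) ((x, y) :: L) := by
  obtain ⟨x, hx⟩ := hL.map_swap.exists_cons holig hEB y
  exact ⟨x, by simpa using hx.map_swap⟩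

theorem FinitelyRealizable.exists_mem_ptStab [Countable M]
    (hclosed : IsClosed (G : Set (Equiv.Perm M))) (holig : LocallyOligo G) {EB : Set M}
    (hEB : EB.Finite) {L : List (M × M)} (hL : FinitelyRealizable G (acl G EB) L) :
    ∃ g ∈ ptStab G (acl G EB), ∀ p ∈ L, g p.1 = p.2 := by
  obtain ⟨g, hg⟩ := exists_perm_of_backAndForth
    (fun L hL => (hL ∅ (empty_subset _) finite_empty).imp fun _ hv => hv.2)
    (fun L hL => hL.exists_cons holig hEB) (fun L hL => hL.exists_cons_swap holig hEB) hL
  have hagree : ∀ s : Finset M, ∀ F ⊆ acl G EB, F.Finite →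
      ∃ v ∈ ptStab G F, (∀ a ∈ s, v a = g a) ∧ ∀ p ∈ L, v p.1 = p.2 := by
    intro s F hFB hF
    obtain ⟨L', hL', hLL', hs⟩ := hg s
    obtain ⟨v, hv, hvL'⟩ := hL' F hFB hF
    exact ⟨v, hv, fun a ha => hvL' _ (hs a ha), fun p hp => hvL' p (hLL' hp)⟩
  refine ⟨g, mem_ptStab.2 ⟨mem_of_isClosed_of_forall_finset hclosed fun s => ?_,
    fun b hb => ?_⟩, fun p hp => ?_⟩
  · classical
    obtain ⟨v, hv, hvg, -⟩ := hagree (s ∪ s.image g.symm) ∅ (empty_subset _) finite_empty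
    refine ⟨v, ptStab_le _ hv, fun a ha => ⟨hvg a (Finset.mem_union_left _ ha), ?_⟩⟩
    rw [Equiv.symm_apply_eq, hvg _ (Finset.mem_union_right _ (Finset.mem_image_of_mem _ ha)),
      Equiv.apply_symm_apply]
  · obtain ⟨v, hv, hvg, -⟩ := hagree {b} {b} (singleton_subset_iff.2 hb) (finite_singleton b)
    rw [← hvg b (Finset.mem_singleton_self b)]
    exact (mem_ptStab.1 hv).2 b rfl
  · obtain ⟨v, -, hvg, hvL⟩ := hagree {p.1} ∅ (empty_subset _) finite_empty
    rw [← hvg _ (Finset.mem_singleton_self _)]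
    exact hvL p hp

theorem LocallyOligo.exists_ptStab_image_inter_subset (holig : LocallyOligo G)
    {E EB F Z : Set M} (hE : E.Finite) (hEB : EB.Finite) (hF : F.Finite) (hFB : F ⊆ acl G EB)
    (hZ : IsFinOrbitUnion G Z) : ∃ u ∈ ptStab G F, u '' acl G E ∩ acl G E ∩ Z ⊆ acl G EB := by
  have hF' : (F ∪ acl G EB ∩ Z).Finite := hF.union (holig.finite_acl_inter hEB hZ)
  have hΔ : (acl G E ∩ Z).Finite := holig.finite_acl_inter hE hZ
  have hΓ : ((acl G E ∩ Z) \ acl G EB).Finite := hΔ.sdiff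
  obtain ⟨⟨u, hu⟩, hΓΔ⟩ := exists_smul_notMem_of_infinite_orbit (Γ := ptStab G _)
    hΓ.toFinset hΔ.toFinset fun γ hγ hfin => (hΓ.mem_toFinset.1 hγ).2
      (acl_subset_of_subset_acl hF' (union_subset hFB inter_subset_left) hfin)
  refine ⟨u, ptStab_anti subset_union_left hu, ?_⟩
  rintro _ ⟨⟨⟨x, hx, rfl⟩, hux⟩, huxZ⟩
  have hxZ : x ∈ Z := by simpa using hZ.apply_mem (inv_mem (ptStab_le _ hu)) huxZ
  by_cases hxB : x ∈ acl G EB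
  · rwa [(mem_ptStab.1 hu).2 x (Or.inr ⟨hxB, hxZ⟩)]
  · exact (hΓΔ x (hΓ.mem_toFinset.2 ⟨⟨hx, hxZ⟩, hxB⟩) (hΔ.mem_toFinset.2 ⟨hux, huxZ⟩)).elim

theorem LocallyOligo.exists_isFinOrbitUnion_image_inter_subset (holig : LocallyOligo G)
    {E EB : Set M} (hE : E.Finite) (hEBE : EB ⊆ E) :
    ∃ Z, IsFinOrbitUnion G Z ∧ ∀ u ∈ G,
      u '' acl G E ∩ acl G E ∩ Z ⊆ acl G EB → u '' acl G E ∩ acl G E ⊆ acl G EB := by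
  have := hE.to_subtype
  obtain ⟨Z₀, hZ₀, hEZ₀⟩ := exists_isFinOrbitUnion_superset (H := G) hE
  obtain ⟨T, hT⟩ := (holig.oligo_ptStab hE hZ₀).exists_finset E
  let W : (E → M) → Set M := fun t => (acl G (range t) ∩ acl G E) \ acl G EB
  have hwitness : ∀ t, ∃ X ⊆ W t, X.Finite ∧ ((W t).Nonempty → X.Nonempty) := fun t => by
    rcases (W t).eq_empty_or_nonempty with h | ⟨x, hx⟩
    · exact ⟨∅, empty_subset _, finite_empty, fun hne => (hne.ne_empty h).elim⟩
    · exact ⟨{x}, singleton_subset_iff.2 hx, finite_singleton x, fun _ => singleton_nonempty x⟩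
  choose X hXW hX hXne using hwitness
  obtain ⟨Z, hZ, hXZ⟩ := exists_isFinOrbitUnion_superset (H := G)
    (T.finite_toSet.biUnion fun t _ => hX t)
  refine ⟨Z, hZ, fun u hu hsub y ⟨hyu, hy⟩ => by_contra fun hyB => ?_⟩
  -- `u '' acl G E = v '' acl G (range t)` with `v ∈ G_E`, so a failure for `u` is the `v`-image of
  -- one for `t`, and then also the witness chosen for `t`, which lies in `Z`, fails.
  obtain ⟨t, ht, v, hv, hvt⟩ := hT (fun a => u a) fun a => hZ₀.apply_mem hu (hEZ₀ a.2)
  have hvEB := ptStab_anti hEBE hv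
  have himage : v '' acl G (range t) = u '' acl G E := by
    rw [← acl_image (ptStab_le _ hv), ← acl_image hu, ← range_comp, image_eq_range]
    exact congrArg (acl G ∘ range) (funext hvt)
  obtain ⟨w, hw, rfl⟩ := himage ▸ hyu
  obtain ⟨x, hxX⟩ := hXne t ⟨w, ⟨hw, (apply_mem_acl_iff hv).1 hy⟩,
    fun hwB => hyB ((apply_mem_acl_iff hvEB).2 hwB)⟩
  obtain ⟨⟨hxt, hxE⟩, hxB⟩ := hXW t hxX
  refine hxB ((apply_mem_acl_iff hvEB).1 (hsub ⟨⟨?_, (apply_mem_acl_iff hv).2 hxE⟩, ?_⟩))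
  · exact himage ▸ mem_image_of_mem v hxt
  · exact hZ.apply_mem (ptStab_le _ hv) (hXZ (mem_biUnion ht hxX))

theorem exists_mem_ptStab_acl_image_inter_subset [Countable M]
    (hclosed : IsClosed (G : Set (Equiv.Perm M))) (holig : LocallyOligo G) {E EB : Set M}
    (hE : E.Finite) (hEB : EB.Finite) (hEBE : EB ⊆ E) :
    ∃ g ∈ ptStab G (acl G EB), g '' acl G E ∩ acl G E ⊆ acl G EB := by
  obtain ⟨F₀, hF₀B, hF₀, hstable⟩ := holig.exists_finite_ptStab_eqOn hEB hE
  obtain ⟨Z, hZ, hreduce⟩ := holig.exists_isFinOrbitUnion_image_inter_subset hE hEBE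
  obtain ⟨u, hu, huZ⟩ := holig.exists_ptStab_image_inter_subset hE hEB hF₀ hF₀B hZ
  let L := hE.toFinset.toList.map fun a => (a, u a)
  have hL : FinitelyRealizable G (acl G EB) L := fun F hFB hF => by
    obtain ⟨k, hk, hku⟩ := hstable F hFB hF u hu
    refine ⟨k, hk, fun p hp => ?_⟩
    obtain ⟨a, ha, rfl⟩ := List.mem_map.1 hp
    exact hku (hE.mem_toFinset.1 (Finset.mem_toList.1 ha))
  obtain ⟨g, hg, hgL⟩ := hL.exists_mem_ptStab hclosed holig hEB
  have hgu : EqOn g u E := fun a ha =>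
    hgL (a, u a) (List.mem_map_of_mem (Finset.mem_toList.2 (hE.mem_toFinset.2 ha)))
  refine ⟨g, hg, ?_⟩
  rw [← acl_image (ptStab_le _ hg), hgu.image_eq, acl_image (ptStab_le _ hu)]
  exact hreduce u (ptStab_le _ hu) huZ

end PermutationGroup

/-- Separation lemma: for algebraic closures `A, B, C` of finite sets with `B ⊆ C`, there
is `g` in the pointwise stabilizer of `B` with `g(C) ∩ A = B ∩ A`. -/
theorem separation_of_algebraic_closures {M : Type*} [Countable M]
    (G : Subgroup (Equiv.Perm M)) (hclosed : IsClosed (G : Set (Equiv.Perm M)))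
    (holig : LocallyOligo G) (A B C : Set M)
    (hA : ∃ E : Set M, E.Finite ∧ A = acl G E)
    (hB : ∃ E : Set M, E.Finite ∧ B = acl G E)
    (hC : ∃ E : Set M, E.Finite ∧ C = acl G E) (hBC : B ⊆ C) :
    ∃ g ∈ ptStab G B, (fun x => g x) '' C ∩ A = B ∩ A := by
  obtain ⟨EA, hEA, rfl⟩ := hA
  obtain ⟨EB, hEB, rfl⟩ := hB
  obtain ⟨EC, hEC, rfl⟩ := hC
  have hAE : EA ⊆ EA ∪ EB ∪ EC := subset_union_left.trans subset_union_left
  have hBE : EB ⊆ EA ∪ EB ∪ EC := subset_union_right.trans subset_union_left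
  have hCE : EC ⊆ EA ∪ EB ∪ EC := subset_union_right
  obtain ⟨g, hg, hsep⟩ := exists_mem_ptStab_acl_image_inter_subset hclosed holig
    ((hEA.union hEB).union hEC) hEB hBE
  refine ⟨g, hg, subset_antisymm ?_ ?_⟩
  · rintro _ ⟨⟨c, hc, rfl⟩, ha⟩
    exact ⟨hsep ⟨mem_image_of_mem g (acl_mono hCE hc), acl_mono hAE ha⟩, ha⟩
  · rintro b ⟨hb, ha⟩
    exact ⟨⟨b, hBC hb, (mem_ptStab.1 hg).2 b hb⟩, ha⟩
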